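/- arXiv:1703.01124 — 3 statements merged into one kernel-verified Lean document; each statement's English description precedes it below -/
import Mathlib

section
/- The set of super-exponential Liouville numbers is dense in ℝ. -/
/-- A real number is a super-exponential Liouville number if it is irrational and
for every `c > 0` there exist `p ∈ ℤ` and `q ∈ ℕ*` with `0 < |a - p/q| < e^{-cq}`. -/
def IsSupExpLiouville (a : ℝ) : Prop :=
  Irrational a ∧ ∀ c : ℝ, 0 < c → ∃ p : ℤ, ∃ q : ℕ, 0 < q ∧
    0 < |a - (p : ℝ) / (q : ℝ)| ∧ |a - (p : ℝ) / (q : ℝ)| < Real.exp (-(c * q))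

open Set Metric Filter

private def SEL.G (n : ℕ) : Set ℝ :=
  ⋃ (p : ℤ) (q : ℕ) (_ : 0 < q), ball ((p : ℝ) / q) (Real.exp (-(((n : ℝ) + 1) * q)))

private lemma SEL.isOpen_G (n : ℕ) : IsOpen (SEL.G n) :=
  isOpen_iUnion fun _ => isOpen_iUnion fun _ => isOpen_iUnion fun _ => isOpen_ball

private lemma SEL.dense_G (n : ℕ) : Dense (SEL.G n) := by
  refine Rat.isDenseEmbedding_coe_real.dense.mono ?_
  rintro _ ⟨r, rfl⟩
  refine mem_iUnion.2 ⟨r.num, mem_iUnion.2 ⟨r.den, mem_iUnion.2 ⟨r.pos, ?_⟩⟩⟩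
  have : ((r.num : ℝ) / (r.den : ℝ)) = (r : ℝ) := by
    rw [Rat.cast_def]
  rw [this]
  exact mem_ball_self (Real.exp_pos _)

private lemma SEL.mem_of (x : ℝ) (hx : Irrational x) (h : ∀ n : ℕ, x ∈ SEL.G n) :
    IsSupExpLiouville x := by
  refine ⟨hx, fun c hc => ?_⟩
  obtain ⟨n, hn⟩ := exists_nat_ge c
  have hx' := h n
  simp only [SEL.G, mem_iUnion] at hx'
  obtain ⟨p, q, hq, hball⟩ := hx'
  rw [mem_ball, Real.dist_eq] at hball
  refine ⟨p, q, hq, ?_, ?_⟩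
  · rw [abs_pos, sub_ne_zero]
    intro hxe
    apply hx
    exact ⟨(p : ℚ) / (q : ℚ), by push_cast; exact hxe.symm⟩
  · refine lt_of_lt_of_le hball (Real.exp_le_exp.2 ?_)
    rw [neg_le_neg_iff]
    have hq' : (0 : ℝ) ≤ (q : ℝ) := Nat.cast_nonneg q
    exact mul_le_mul_of_nonneg_right (le_trans hn (by linarith)) hq'

/-- The set of super-exponential Liouville numbers is dense in ℝ. -/
theorem dense_supExpLiouville : Dense {a : ℝ | IsSupExpLiouville a} := by
  have hres : ∀ᶠ x in residual ℝ, IsSupExpLiouville x := by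
    have h1 : ∀ᶠ x in residual ℝ, Irrational x := eventually_residual_irrational
    have h2 : ∀ᶠ x in residual ℝ, x ∈ ⋂ n : ℕ, SEL.G n := by
      have : ∀ n : ℕ, SEL.G n ∈ residual ℝ := fun n =>
        residual_of_dense_open (SEL.isOpen_G n) (SEL.dense_G n)
      exact (countable_iInter_mem.2 this : (⋂ n, SEL.G n) ∈ residual ℝ)
    filter_upwards [h1, h2] with x hx hx'
    exact SEL.mem_of x hx (fun n => mem_iInter.1 hx' n)
  exact dense_of_mem_residual hres
end

section
/- Let ω > 0 with π/ω irrational. Then the power series ∑_{ℓ≥1} x^ℓ / sin(ℓω) has radius of convergence equal to 1 if and only if π/ω is not an exponential Liouville number. -/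
/-!
Write `a = π / ω`. Since `|sin (nω)| = |sin (nω - qπ)|` and `nω - qπ = -ω q (a - n / q)`, the bounds
`2|y|/π ≤ |sin y| ≤ |y|` (the first for `|y| ≤ π/2`) make `|sin (nω)|` comparable to `ω q |a - n/q|`
when `q` is the integer nearest to `n / a`. So `a` is an exponential Liouville number exactly when
`|sin (nω)|` is exponentially small along a subsequence. If it is, `|sin (nω)| ≤ rⁿ` infinitely
often for some `r < 1`, and the series diverges at `x = r`. If not, `|sin (nω)| ≥ K rⁿ`
eventually for every `r < 1`, so the series is dominated by a geometric one when `|x| < 1`.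
For `|x| > 1` the terms have modulus at least `|x|ⁿ ≥ 1`.
-/

open Real

/-- A real number is an exponential Liouville number if it is irrational and
there exists `c > 0` and infinitely many pairs `(p,q) ∈ ℤ × ℕ*` with
`0 < |a - p/q| < e^{-cq}`. -/
def IsExpLiouville (a : ℝ) : Prop :=
  Irrational a ∧ ∃ c : ℝ, 0 < c ∧
    {pq : ℤ × ℕ | 0 < pq.2 ∧ 0 < |a - (pq.1 : ℝ) / (pq.2 : ℝ)| ∧
      |a - (pq.1 : ℝ) / (pq.2 : ℝ)| < Real.exp (-(c * pq.2))}.Infinite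

open Filter

section GeometricComparison

variable {s : ℕ → ℝ} {x : ℝ}

theorem summable_pow_div_of_mul_pow_le_abs
    (hs : ∀ r, 0 < r → r < 1 → ∃ K > 0, ∀ᶠ n in atTop, K * r ^ n ≤ |s n|) (hx : |x| < 1) :
    Summable fun n => x ^ n / s n := by
  obtain ⟨r, hxr, hr1⟩ := exists_between hx
  have hr0 : 0 < r := (abs_nonneg x).trans_lt hxr
  obtain ⟨K, hK, hKs⟩ := hs r hr0 hr1
  refine Summable.of_norm_bounded_eventually_nat
    ((summable_geometric_of_lt_one (by positivity) ((div_lt_one hr0).2 hxr)).mul_left K⁻¹) ?_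
  filter_upwards [hKs] with n hn
  calc ‖x ^ n / s n‖ = |x| ^ n / |s n| := by simp only [norm_div, norm_pow, Real.norm_eq_abs]
    _ ≤ |x| ^ n / (K * r ^ n) := div_le_div_of_nonneg_left (by positivity) (by positivity) hn
    _ = K⁻¹ * (|x| / r) ^ n := by rw [div_pow]; field_simp

theorem not_summable_pow_div_of_frequently_abs_le_pow
    (h : ∃ᶠ n in atTop, s n ≠ 0 ∧ |s n| ≤ |x| ^ n) :
    ¬Summable fun n => x ^ n / s n := by
  intro hsum
  have hlt := (tendsto_zero_iff_norm_tendsto_zero.1 hsum.tendsto_atTop_zero).eventually_lt_const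
    one_pos
  obtain ⟨n, ⟨hn0, hn⟩, hlt⟩ := (h.and_eventually hlt).exists
  rw [norm_div, norm_pow, Real.norm_eq_abs, Real.norm_eq_abs, div_lt_one (abs_pos.2 hn0)] at hlt
  exact hlt.not_ge hn

end GeometricComparison

theorem finite_setOf_abs_sub_div_lt (a ε : ℝ) {q : ℕ} (hq : 0 < q) :
    {p : ℤ | |a - p / q| < ε}.Finite := by
  have hq' : (0 : ℝ) < q := Nat.cast_pos.2 hq
  refine (Set.finite_Icc ⌊(a - ε) * q⌋ ⌈(a + ε) * q⌉).subset fun p (hp : |a - p / q| < ε) => ?_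
  obtain ⟨h₁, h₂⟩ := abs_sub_lt_iff.1 hp
  have hlow : (a - ε) * q < p := by rw [← lt_div_iff₀ hq']; linarith
  have hupp : p < (a + ε) * q := by rw [← div_lt_iff₀ hq']; linarith
  exact ⟨Int.floor_le_iff.2 (by linarith), Int.le_ceil_iff.2 (by linarith)⟩

theorem isExpLiouville_iff_frequently {a : ℝ} (ha : Irrational a) :
    IsExpLiouville a ↔ ∃ c > 0, ∃ᶠ q : ℕ in atTop, ∃ p : ℤ, |a - p / q| < exp (-(c * q)) := by
  have hpos (p : ℤ) (q : ℕ) : 0 < |a - p / q| :=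
    abs_pos.2 (sub_ne_zero.2 (by exact_mod_cast ha.ne_rat (p / q)))
  simp only [Nat.frequently_atTop_iff_infinite]
  constructor
  · rintro ⟨-, c, hc, hS⟩
    refine ⟨c, hc, fun hT => hS (Set.Finite.of_finite_fibers Prod.snd (hT.subset ?_) ?_)⟩
    · rintro _ ⟨⟨p, q⟩, ⟨-, -, h⟩, rfl⟩
      exact ⟨p, h⟩
    · rintro _ ⟨⟨p, q⟩, ⟨hq, -, -⟩, rfl⟩
      refine ((finite_setOf_abs_sub_div_lt a 1 hq).image (fun p => (p, q))).subset ?_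
      rintro ⟨p', q'⟩ ⟨⟨-, -, h⟩, rfl : q' = q⟩
      exact ⟨p', h.trans_le (exp_le_one_iff.2 (neg_nonpos.2 (by positivity))), rfl⟩
  · rintro ⟨c, hc, hT⟩
    refine ⟨ha, c, hc, fun hS => hT (((hS.image Prod.snd).insert 0).subset ?_)⟩
    rintro q ⟨p, h⟩
    rcases Nat.eq_zero_or_pos q with rfl | hq
    · exact Or.inl rfl
    · exact Or.inr ⟨(p, q), ⟨hq, hpos p q, h⟩, rfl⟩

theorem eventually_mul_mul_exp_neg_le {c : ℝ} (hc : 0 < c) (K : ℝ) :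
    ∀ᶠ q : ℕ in atTop, K * q * exp (-(c * q)) ≤ exp (-(c / 2 * q)) := by
  have h := ((tendsto_pow_mul_exp_neg_atTop_nhds_zero 1).comp
    (tendsto_natCast_atTop_atTop.const_mul_atTop (half_pos hc))).const_mul (2 * K / c)
  rw [mul_zero] at h
  filter_upwards [h.eventually_lt_const one_pos] with q hq
  have hq' : K * q * exp (-(c / 2 * q)) < 1 := by
    refine lt_of_eq_of_lt ?_ hq
    simp only [Function.comp_apply, pow_one]
    field_simp
  have hsplit : exp (-(c * q)) = exp (-(c / 2 * q)) * exp (-(c / 2 * q)) := by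
    rw [← exp_add]; ring_nf
  rw [hsplit, ← mul_assoc]
  exact mul_le_of_le_one_left (exp_pos _).le hq'.le

section SinOfMultiples

variable {ω : ℝ}

theorem abs_sin_sub_natCast_mul_pi (y : ℝ) (q : ℕ) : |sin (y - q * π)| = |sin y| := by
  rw [sin_sub_nat_mul_pi, abs_mul, abs_pow, abs_neg, abs_one, one_pow, one_mul]

theorem abs_mul_sub_mul_pi (hω : 0 < ω) (y : ℝ) {q : ℝ} (hq : 0 < q) :
    |y * ω - q * π| = ω * q * |π / ω - y / q| := by
  rw [show y * ω - q * π = -(ω * q * (π / ω - y / q)) by field_simp; ring, abs_neg, abs_mul,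
    abs_of_pos (mul_pos hω hq)]

theorem abs_sin_mul_le (hω : 0 < ω) (y : ℝ) {q : ℕ} (hq : 0 < q) :
    |sin (y * ω)| ≤ ω * q * |π / ω - y / q| := by
  rw [← abs_mul_sub_mul_pi hω y (Nat.cast_pos.2 hq), ← abs_sin_sub_natCast_mul_pi _ q]
  exact abs_sin_le_abs

theorem two_div_pi_mul_le_abs_sin_mul (hω : 0 < ω) (y : ℝ) {q : ℕ} (hq : 0 < q)
    (hyq : |y * ω / π - q| ≤ 1 / 2) :
    2 / π * (ω * q * |π / ω - y / q|) ≤ |sin (y * ω)| := by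
  rw [← abs_mul_sub_mul_pi hω y (Nat.cast_pos.2 hq), ← abs_sin_sub_natCast_mul_pi _ q]
  refine mul_abs_le_abs_sin ?_
  rw [show y * ω - q * π = (y * ω / π - q) * π by field_simp, abs_mul, abs_of_pos pi_pos]
  linarith [mul_le_mul_of_nonneg_right hyq pi_pos.le]

theorem sin_natCast_mul_ne_zero (hirr : Irrational (π / ω)) {n : ℕ} (hn : n ≠ 0) :
    sin (n * ω) ≠ 0 := by
  have hω : ω ≠ 0 := by
    rintro rfl
    simp at hirr
  rw [Ne, sin_eq_zero_iff]
  rintro ⟨m, hm⟩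
  have hm0 : (m : ℝ) ≠ 0 := by
    rintro hm0
    rw [hm0, zero_mul, eq_comm, mul_eq_zero] at hm
    exact hm.elim (by exact_mod_cast hn) hω
  apply hirr.ne_rat (n / m)
  push_cast
  rw [div_eq_div_iff hω hm0]
  linarith

theorem exists_mul_pow_le_abs_sin_of_not_isExpLiouville (hω : 0 < ω)
    (hirr : Irrational (π / ω)) (hL : ¬IsExpLiouville (π / ω)) {r : ℝ} (hr0 : 0 < r)
    (hr1 : r < 1) : ∃ K > 0, ∀ᶠ n : ℕ in atTop, K * r ^ n ≤ |sin (n * ω)| := by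
  -- chosen so that `exp (-(c * (n * ω / π))) = r ^ n`
  set c := -log r * (π / ω) with hc_def
  have hc : 0 < c := mul_pos (neg_pos.2 (log_neg hr0 hr1)) (div_pos pi_pos hω)
  have hdioph : ∀ᶠ q : ℕ in atTop, ∀ p : ℤ, exp (-(c * q)) ≤ |π / ω - p / q| := by
    have h := (isExpLiouville_iff_frequently hirr).not.1 hL
    simp only [not_exists, not_and, not_frequently, not_lt] at h
    exact h c hc
  -- the integer nearest to `n * ω / π`, so that `|n * ω - q n * π| ≤ π / 2`
  set q : ℕ → ℕ := fun n => ⌊n * ω / π + 1 / 2⌋₊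
  have hq : Tendsto q atTop atTop := tendsto_nat_floor_atTop.comp <|
    tendsto_atTop_add_const_right _ _ <|
      (tendsto_natCast_atTop_atTop.atTop_mul_const hω).atTop_div_const pi_pos
  refine ⟨2 * ω / π * exp (-(c / 2)), by positivity, ?_⟩
  filter_upwards [hq.eventually hdioph, hq.eventually_ge_atTop 1] with n hn hq1
  have hqle : (q n : ℝ) ≤ n * ω / π + 1 / 2 := Nat.floor_le (by positivity)
  have hqgt : n * ω / π + 1 / 2 < q n + 1 := Nat.lt_floor_add_one _
  have hexp : exp (-(c / 2)) * r ^ n ≤ exp (-(c * q n)) := by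
    rw [← exp_log hr0, ← exp_nat_mul, ← exp_add, exp_le_exp]
    have h₁ := mul_le_mul_of_nonneg_left hqle hc.le
    have h₂ : c * (n * ω / π) = -log r * n := by rw [hc_def]; field_simp
    linarith
  have hdist : exp (-(c * q n)) ≤ q n * |π / ω - n / q n| := by
    have h := hn n
    push_cast at h
    exact h.trans (le_mul_of_one_le_left (abs_nonneg _) (by exact_mod_cast hq1))
  calc 2 * ω / π * exp (-(c / 2)) * r ^ n ≤ 2 * ω / π * exp (-(c * q n)) := by
        rw [mul_assoc]; gcongr
    _ ≤ 2 * ω / π * (q n * |π / ω - n / q n|) := by gcongr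
    _ = 2 / π * (ω * q n * |π / ω - n / q n|) := by ring
    _ ≤ |sin (n * ω)| :=
        two_div_pi_mul_le_abs_sin_mul hω n hq1 (abs_le.2 ⟨by linarith, by linarith⟩)

theorem exists_frequently_abs_sin_le_pow_of_isExpLiouville (hω : 0 < ω)
    (hL : IsExpLiouville (π / ω)) :
    ∃ r, 0 < r ∧ r < 1 ∧ ∃ᶠ n : ℕ in atTop, |sin (n * ω)| ≤ r ^ n := by
  have ha : 0 < π / ω := div_pos pi_pos hω
  obtain ⟨c, hc, hfreq⟩ := (isExpLiouville_iff_frequently hL.1).1 hL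
  have hsmall : ∀ᶠ q : ℕ in atTop, exp (-(c * q)) < π / ω / 2 :=
    (tendsto_exp_neg_atTop_nhds_zero.comp
      (tendsto_natCast_atTop_atTop.const_mul_atTop hc)).eventually_lt_const (half_pos ha)
  have hpoly := eventually_mul_mul_exp_neg_le hc ω
  -- the approximations `p / q` have `p < 2 * (π / ω) * q`, so `exp (-(c / 2 * q)) ≤ r ^ p`
  refine ⟨exp (-(c / (4 * (π / ω)))), exp_pos _, exp_lt_one_iff.2 ?_, ?_⟩
  · exact neg_neg_of_pos (by positivity)
  refine frequently_atTop.2 fun N => ?_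
  obtain ⟨q, ⟨p, hpq⟩, hq_small, hq_poly, hq0, hqN⟩ := (hfreq.and_eventually (hsmall.and
    (hpoly.and ((eventually_gt_atTop 0).and (eventually_ge_atTop ⌈2 * N / (π / ω)⌉₊))))).exists
  have hq0' : (0 : ℝ) < q := Nat.cast_pos.2 hq0
  obtain ⟨h₁, h₂⟩ := abs_sub_lt_iff.1 (hpq.trans hq_small)
  have hp_low : π / ω / 2 * q < p := by rw [← lt_div_iff₀ hq0']; linarith
  have hp_up : p < 2 * (π / ω) * q := by rw [← div_lt_iff₀ hq0']; linarith
  have hqN' : 2 * N / (π / ω) ≤ q := Nat.ceil_le.1 hqN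
  lift p to ℕ using (by exact_mod_cast (by positivity : (0 : ℝ) ≤ π / ω / 2 * q).trans hp_low.le)
  push_cast at hpq hp_low hp_up
  refine ⟨p, ?_, ?_⟩
  · have : (N : ℝ) ≤ π / ω / 2 * q := by rw [div_le_iff₀ ha] at hqN'; linarith
    exact_mod_cast this.trans hp_low.le
  calc |sin (p * ω)| ≤ ω * q * |π / ω - p / q| := abs_sin_mul_le hω p hq0
    _ ≤ ω * q * exp (-(c * q)) := by gcongr
    _ ≤ exp (-(c / 2 * q)) := hq_poly
    _ ≤ exp (-(c / (4 * (π / ω)))) ^ p := by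
        rw [← exp_nat_mul, exp_le_exp]
        have : c / (4 * (π / ω)) * p ≤ c / 2 * q := by
          rw [div_mul_eq_mul_div, div_le_iff₀ (by positivity)]
          nlinarith
        linarith

end SinOfMultiples

/-- The power series `∑_{ℓ≥1} x^ℓ / sin (ℓω)` has radius of convergence equal
to `1` (i.e. converges for `|x| < 1` and diverges for `|x| > 1`) if and only if
`π/ω` is not an exponential Liouville number. -/
theorem radius_sin_series_eq_one_iff (ω : ℝ) (hω : 0 < ω)
    (hirr : Irrational (π / ω)) :
    ((∀ x : ℝ, |x| < 1 →
        Summable (fun ℓ : ℕ => x ^ (ℓ + 1) / Real.sin ((ℓ + 1 : ℕ) * ω))) ∧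
     (∀ x : ℝ, 1 < |x| →
        ¬ Summable (fun ℓ : ℕ => x ^ (ℓ + 1) / Real.sin ((ℓ + 1 : ℕ) * ω))))
    ↔ ¬ IsExpLiouville (π / ω) := by
  have hshift (x : ℝ) : Summable (fun ℓ : ℕ => x ^ (ℓ + 1) / sin ((ℓ + 1 : ℕ) * ω)) ↔
      Summable (fun n : ℕ => x ^ n / sin (n * ω)) :=
    summable_nat_add_iff (f := fun n : ℕ => x ^ n / sin (n * ω)) 1
  have hsin : ∀ᶠ n : ℕ in atTop, sin (n * ω) ≠ 0 :=
    (eventually_ne_atTop 0).mono fun n => sin_natCast_mul_ne_zero hirr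
  simp only [hshift]
  constructor
  · rintro ⟨hconv, -⟩ hL
    obtain ⟨r, hr0, hr1, hsmall⟩ := exists_frequently_abs_sin_le_pow_of_isExpLiouville hω hL
    rw [← abs_of_pos hr0] at hr1 hsmall
    exact not_summable_pow_div_of_frequently_abs_le_pow
      ((hsmall.and_eventually hsin).mono fun _ hn => hn.symm) (hconv r hr1)
  · intro hL
    refine ⟨fun x hx => summable_pow_div_of_mul_pow_le_abs
      (fun r hr0 hr1 => exists_mul_pow_le_abs_sin_of_not_isExpLiouville hω hirr hL hr0 hr1) hx,
      fun x hx => not_summable_pow_div_of_frequently_abs_le_pow ?_⟩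
    exact (hsin.mono fun n hn => ⟨hn, (abs_sin_le_one _).trans (one_le_pow₀ hx.le)⟩).frequently
end

section
/- Let f(t) = ∑_{α ∈ ℕ²} f̃_α ζ^{α₁} ζ̄^{α₂} be a convergent power series in ζ = t₁ + i t₂ and ζ̄ on the ball B(0, M⁻¹), with |f̃_α| ≤ C M^{|α|}. Then the series u_f(t) = ∑_{α ∈ ℕ²} f̃_α/(4(α₁+1)(α₂+1)) · ζ^{α₁+1} ζ̄^{α₂+1} converges on B(0, M⁻¹) and satisfies Δ u_f = f there. -/
open Complex

/-- The planar Laplacian `Δ = ∂²/∂t₁² + ∂²/∂t₂²` of a function on `ℂ ≃ ℝ²`,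
as the sum of the second directional derivatives in the directions `1` and `I`. -/
noncomputable def laplacianC (u : ℂ → ℂ) (z : ℂ) : ℂ :=
  fderiv ℝ (fun w => fderiv ℝ u w 1) z 1 +
    fderiv ℝ (fun w => fderiv ℝ u w Complex.I) z Complex.I

/-!
The real derivative of `ζ^a ζ̄^b` in the direction `v` is `a ζ^(a-1) ζ̄^b v + b ζ^a ζ̄^(b-1) v̄`.
So a series `∑ c_α ζ^α₁ ζ̄^α₂` converging absolutely on a ball may be differentiated termwise
there (the factor `|α|` produced by differentiation does not shrink the radius), and its
derivative in the direction `v` is `∂_ζ(…) v + ∂_ζ̄(…) v̄`, where `∂_ζ` and `∂_ζ̄` are again such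
series, with coefficients `(β₁+1) c_{β+(1,0)}` and `(β₂+1) c_{β+(0,1)}`. Differentiating twice in
the directions `1` and `i` and adding gives `Δ = 4 ∂_ζ ∂_ζ̄`; on coefficients `∂_ζ ∂_ζ̄` is
`c ↦ (β₁+1)(β₂+1) c_{β+(1,1)}`, which the coefficients of `u_f` invert. The bound
`|f̃_α| ≤ C M^|α|` makes every series involved converge absolutely on `B(0, M⁻¹)`.
-/

open ComplexConjugate Filter Topology Metric

section Shift

lemma injective_shift (i j : ℕ) : Function.Injective fun β : ℕ × ℕ => (β.1 + i, β.2 + j) :=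
  fun β β' h => by
    simp only [Prod.mk.injEq, add_left_inj] at h
    exact Prod.ext h.1 h.2

lemma eq_zero_of_notMem_range_shift {X : Type*} [Zero X] {f : ℕ × ℕ → X} {i j : ℕ}
    (hf : ∀ γ : ℕ × ℕ, γ.1 < i ∨ γ.2 < j → f γ = 0) (γ : ℕ × ℕ) (hγ : γ ∉ Set.range fun β : ℕ × ℕ => (β.1 + i, β.2 + j)) : f γ = 0 := by
  refine hf γ (by_contra fun h => hγ ⟨(γ.1 - i, γ.2 - j), ?_⟩)
  simp only [not_or, not_lt] at h
  ext <;> simp only <;> omega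

variable {X : Type*} [AddCommMonoid X] [TopologicalSpace X] {f : ℕ × ℕ → X} {i j : ℕ}

lemma tsum_shift (hf : ∀ γ : ℕ × ℕ, γ.1 < i ∨ γ.2 < j → f γ = 0) :
    ∑' β : ℕ × ℕ, f (β.1 + i, β.2 + j) = ∑' γ, f γ :=
  (injective_shift i j).tsum_eq fun γ hγ =>
    not_not.mp fun h => hγ (eq_zero_of_notMem_range_shift hf γ h)

lemma summable_shift_iff (hf : ∀ γ : ℕ × ℕ, γ.1 < i ∨ γ.2 < j → f γ = 0) :
    Summable (fun β : ℕ × ℕ => f (β.1 + i, β.2 + j)) ↔ Summable f :=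
  (injective_shift i j).summable_iff (eq_zero_of_notMem_range_shift hf)

lemma hasSum_shift_iff (hf : ∀ γ : ℕ × ℕ, γ.1 < i ∨ γ.2 < j → f γ = 0) {a : X} :
    HasSum (fun β : ℕ × ℕ => f (β.1 + i, β.2 + j)) a ↔ HasSum f a :=
  (injective_shift i j).hasSum_iff (eq_zero_of_notMem_range_shift hf)

end Shift

lemma exists_nat_mul_pow_le {R R' : ℝ} (hR : 0 ≤ R) (hRR' : R < R') :
    ∃ K, ∀ n : ℕ, n * R ^ n ≤ K * R' ^ n := by
  have hR' : 0 < R' := hR.trans_lt hRR'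
  obtain ⟨K, hK⟩ := (tendsto_self_mul_const_pow_of_lt_one (div_nonneg hR hR'.le)
    ((div_lt_one hR').mpr hRR')).bddAbove_range
  refine ⟨K, fun n => ?_⟩
  have : n * (R / R') ^ n ≤ K := hK ⟨n, rfl⟩
  rwa [div_pow, mul_div_assoc', div_le_iff₀ (pow_pos hR' n)] at this

lemma norm_natCast_add_one (n : ℕ) : ‖(n : ℂ) + 1‖ = n + 1 := by
  exact_mod_cast Complex.norm_natCast (n + 1)

noncomputable def zMonomial (α : ℕ × ℕ) (w : ℂ) : ℂ := w ^ α.1 * conj w ^ α.2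

noncomputable def zMonomialDeriv (α : ℕ × ℕ) (w : ℂ) : ℂ →L[ℝ] ℂ :=
  (α.1 * zMonomial (α.1 - 1, α.2) w) • ContinuousLinearMap.id ℝ ℂ +
    (α.2 * zMonomial (α.1, α.2 - 1) w) • (conjCLE : ℂ →L[ℝ] ℂ)

lemma norm_zMonomial (α : ℕ × ℕ) (w : ℂ) : ‖zMonomial α w‖ = ‖w‖ ^ (α.1 + α.2) := by
  simp [zMonomial, pow_add]

lemma hasFDerivAt_zMonomial (α : ℕ × ℕ) (w : ℂ) :
    HasFDerivAt (zMonomial α) (zMonomialDeriv α w) w := by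
  have hz : HasFDerivAt (fun w : ℂ => w ^ α.1) _ w :=
    (hasDerivAt_pow α.1 w).hasFDerivAt.restrictScalars ℝ
  have hzbar : HasFDerivAt (fun w : ℂ => conj w ^ α.2) _ w :=
    ((hasDerivAt_pow α.2 (conj w)).hasFDerivAt.restrictScalars ℝ).comp w conjCLE.hasFDerivAt
  refine (hz.mul hzbar).congr_fderiv ?_
  ext v
  simp only [zMonomialDeriv, zMonomial, add_apply, smul_apply, ContinuousLinearMap.comp_apply,
    ContinuousLinearEquiv.coe_coe, ContinuousAlgEquiv.coeCLE_apply, conjCAE_apply,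
    ContinuousLinearMap.coe_restrictScalars', ContinuousLinearMap.toSpanSingleton_apply,
    smul_eq_mul, ContinuousLinearMap.id_apply]
  ring

lemma nat_mul_pow_pred_add_mul (a b : ℕ) (R : ℝ) :
    a * R ^ (a - 1 + b) * R = a * R ^ (a + b) := by
  cases a with
  | zero => simp
  | succ a => rw [mul_assoc, ← pow_succ, Nat.add_sub_cancel, Nat.add_right_comm]

lemma norm_zMonomialDeriv_mul_le (α : ℕ × ℕ) {w : ℂ} {R : ℝ} (hw : ‖w‖ ≤ R) :
    ‖zMonomialDeriv α w‖ * R ≤ (α.1 + α.2) * R ^ (α.1 + α.2) := by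
  have hR : 0 ≤ R := (norm_nonneg w).trans hw
  have hterm : ∀ (L : ℂ →L[ℝ] ℂ) (a : ℕ) (β : ℕ × ℕ), ‖L‖ ≤ 1 →
      ‖(a * zMonomial β w) • L‖ ≤ a * R ^ (β.1 + β.2) := fun L a β hL => by
    refine (L.opNorm_smul_le _).trans ?_
    rw [norm_mul, Complex.norm_natCast, norm_zMonomial]
    have := pow_le_pow_left₀ (norm_nonneg w) hw (β.1 + β.2)
    calc _ ≤ a * ‖w‖ ^ (β.1 + β.2) * 1 := by gcongr
      _ ≤ _ := by rw [mul_one]; gcongr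
  have hD : ‖zMonomialDeriv α w‖ ≤
      α.1 * R ^ (α.1 - 1 + α.2) + α.2 * R ^ (α.2 - 1 + α.1) := by
    refine (norm_add_le _ _).trans (add_le_add ?_ ?_)
    · exact hterm _ _ _ (ContinuousLinearMap.norm_id_le)
    · rw [add_comm (α.2 - 1)]
      exact hterm _ _ (α.1, α.2 - 1) conjCLE_norm.le
  calc _ ≤ (α.1 * R ^ (α.1 - 1 + α.2) + α.2 * R ^ (α.2 - 1 + α.1)) * R := by gcongr
    _ = (α.1 + α.2) * R ^ (α.1 + α.2) := by
      rw [add_mul, nat_mul_pow_pred_add_mul, nat_mul_pow_pred_add_mul, add_comm α.2 α.1]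
      ring

noncomputable def zSeries (c : ℕ × ℕ → ℂ) (w : ℂ) : ℂ := ∑' α, c α * zMonomial α w

/-- Coefficients of `∂_ζ` of `zSeries c`. -/
def dz (c : ℕ × ℕ → ℂ) (β : ℕ × ℕ) : ℂ := (β.1 + 1) * c (β.1 + 1, β.2)

/-- Coefficients of `∂_ζ̄` of `zSeries c`. -/
def dzbar (c : ℕ × ℕ → ℂ) (β : ℕ × ℕ) : ℂ := (β.2 + 1) * c (β.1, β.2 + 1)

lemma dzbar_dz (c : ℕ × ℕ → ℂ) : dzbar (dz c) = dz (dzbar c) := by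
  ext β
  simp only [dz, dzbar]
  ring

def AbsConvOnBall (c : ℕ × ℕ → ℂ) (ρ : ℝ) : Prop :=
  ∀ R, 0 < R → R < ρ → Summable fun α : ℕ × ℕ => ‖c α‖ * R ^ (α.1 + α.2)

section Series

variable {c : ℕ × ℕ → ℂ} {ρ : ℝ}

lemma AbsConvOnBall.summable_deg_mul (hc : AbsConvOnBall c ρ) {R : ℝ} (hR : 0 < R)
    (hRρ : R < ρ) : Summable fun α : ℕ × ℕ => (α.1 + α.2) * ‖c α‖ * R ^ (α.1 + α.2) := by
  obtain ⟨R', hRR', hR'ρ⟩ := exists_between hRρ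
  obtain ⟨K, hK⟩ := exists_nat_mul_pow_le hR.le hRR'
  refine ((hc R' (hR.trans hRR') hR'ρ).mul_left K).of_nonneg_of_le (fun α => by positivity)
    fun α => ?_
  have := hK (α.1 + α.2)
  push_cast at this
  calc _ = ‖c α‖ * ((α.1 + α.2) * R ^ (α.1 + α.2)) := by ring
    _ ≤ ‖c α‖ * (K * R' ^ (α.1 + α.2)) := by gcongr
    _ = _ := by ring

lemma absConvOnBall_dz (hc : AbsConvOnBall c ρ) : AbsConvOnBall (dz c) ρ := by
  intro R hR hRρ
  refine (((hc.summable_deg_mul hR hRρ).comp_injective (injective_shift 1 0)).mul_left R⁻¹)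
    |>.of_nonneg_of_le (fun β => by positivity) fun β => ?_
  simp only [Function.comp_apply, dz, norm_mul, norm_natCast_add_one, add_zero]
  push_cast
  calc _ = R⁻¹ * ((β.1 + 1) * ‖c (β.1 + 1, β.2)‖ * R ^ (β.1 + 1 + β.2)) := by
        rw [Nat.add_right_comm, pow_succ]
        field_simp
    _ ≤ _ := by gcongr _ * (?_ * _ * _); linarith [(β.2.cast_nonneg : (0 : ℝ) ≤ β.2)]

lemma absConvOnBall_dzbar (hc : AbsConvOnBall c ρ) : AbsConvOnBall (dzbar c) ρ := by
  intro R hR hRρ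
  refine (((hc.summable_deg_mul hR hRρ).comp_injective (injective_shift 0 1)).mul_left R⁻¹)
    |>.of_nonneg_of_le (fun β => by positivity) fun β => ?_
  simp only [Function.comp_apply, dzbar, norm_mul, norm_natCast_add_one, add_zero]
  push_cast
  calc _ = R⁻¹ * ((β.2 + 1) * ‖c (β.1, β.2 + 1)‖ * R ^ (β.1 + (β.2 + 1))) := by
        rw [← add_assoc, pow_succ]
        field_simp
    _ ≤ _ := by gcongr _ * (?_ * _ * _); linarith [(β.1.cast_nonneg : (0 : ℝ) ≤ β.1)]

lemma summable_zSeries (hc : AbsConvOnBall c ρ) {w : ℂ} (hw : ‖w‖ < ρ) :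
    Summable fun α => c α * zMonomial α w := by
  obtain ⟨R, hwR, hRρ⟩ := exists_between hw
  refine (hc R ((norm_nonneg w).trans_lt hwR) hRρ).of_norm_bounded fun α => ?_
  rw [norm_mul, norm_zMonomial]
  gcongr

lemma hasSum_fst_mul_zMonomial (hc : AbsConvOnBall c ρ) {w : ℂ} (hw : ‖w‖ < ρ) :
    HasSum (fun α => c α * (α.1 * zMonomial (α.1 - 1, α.2) w)) (zSeries (dz c) w) := by
  rw [zSeries]
  refine (hasSum_shift_iff (i := 1) (j := 0) fun γ hγ => ?_).mp ?_
  · simp [show γ.1 = 0 by omega]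
  · convert (summable_zSeries (absConvOnBall_dz hc) hw).hasSum using 2 with β
    simp only [dz, add_zero, Nat.add_sub_cancel]
    push_cast
    ring

lemma hasSum_snd_mul_zMonomial (hc : AbsConvOnBall c ρ) {w : ℂ} (hw : ‖w‖ < ρ) :
    HasSum (fun α => c α * (α.2 * zMonomial (α.1, α.2 - 1) w)) (zSeries (dzbar c) w) := by
  rw [zSeries]
  refine (hasSum_shift_iff (i := 0) (j := 1) fun γ hγ => ?_).mp ?_
  · simp [show γ.2 = 0 by omega]
  · convert (summable_zSeries (absConvOnBall_dzbar hc) hw).hasSum using 2 with β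
    simp only [dzbar, add_zero, Nat.add_sub_cancel]
    push_cast
    ring

lemma hasFDerivAt_zSeries (hc : AbsConvOnBall c ρ) {w : ℂ} (hw : ‖w‖ < ρ) :
    HasFDerivAt (zSeries c) (zSeries (dz c) w • ContinuousLinearMap.id ℝ ℂ +
      zSeries (dzbar c) w • (conjCLE : ℂ →L[ℝ] ℂ)) w := by
  obtain ⟨R, hwR, hRρ⟩ := exists_between hw
  have hR : 0 < R := (norm_nonneg w).trans_lt hwR
  have hbound : ∀ α, ∀ y ∈ ball (0 : ℂ) R,
      ‖c α • zMonomialDeriv α y‖ ≤ R⁻¹ * ((α.1 + α.2) * ‖c α‖ * R ^ (α.1 + α.2)) := by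
    intro α y hy
    have hD := norm_zMonomialDeriv_mul_le α (mem_ball_zero_iff.mp hy).le
    refine (ContinuousLinearMap.opNorm_smul_le _ _).trans ?_
    rw [← le_div_iff₀ hR] at hD
    calc _ ≤ ‖c α‖ * ((α.1 + α.2) * R ^ (α.1 + α.2) / R) := by gcongr
      _ = _ := by field_simp
  have hderiv : HasFDerivAt (zSeries c) (∑' α, c α • zMonomialDeriv α w) w :=
    hasFDerivAt_tsum_of_isPreconnected ((hc.summable_deg_mul hR hRρ).mul_left R⁻¹)
      isOpen_ball (convex_ball 0 R).isPreconnected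
      (fun α y _ => (hasFDerivAt_zMonomial α y).const_mul (c α)) hbound
      (mem_ball_zero_iff.mpr hwR) (summable_zSeries hc hw) (mem_ball_zero_iff.mpr hwR)
  convert hderiv using 1
  refine (((hasSum_fst_mul_zMonomial hc hw).smul_const _).add
    ((hasSum_snd_mul_zMonomial hc hw).smul_const _)).tsum_eq.symm.trans (tsum_congr fun α => ?_)
  simp only [zMonomialDeriv, smul_add, smul_smul]

lemma fderiv_zSeries_apply (hc : AbsConvOnBall c ρ) {w : ℂ} (hw : ‖w‖ < ρ) (v : ℂ) :
    fderiv ℝ (zSeries c) w v = zSeries (dz c) w * v + zSeries (dzbar c) w * conj v := by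
  simp [(hasFDerivAt_zSeries hc hw).fderiv]

lemma fderiv_fderiv_zSeries_apply (hc : AbsConvOnBall c ρ) {z : ℂ} (hz : ‖z‖ < ρ) (v : ℂ) :
    fderiv ℝ (fun w => fderiv ℝ (zSeries c) w v) z v =
      (zSeries (dz (dz c)) z * v + zSeries (dzbar (dz c)) z * conj v) * v +
        (zSeries (dz (dzbar c)) z * v + zSeries (dzbar (dzbar c)) z * conj v) * conj v := by
  have hev : (fun w => fderiv ℝ (zSeries c) w v) =ᶠ[𝓝 z]
      fun w => zSeries (dz c) w * v + zSeries (dzbar c) w * conj v := by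
    filter_upwards [isOpen_ball.mem_nhds (mem_ball_zero_iff.mpr hz)] with w hw
    exact fderiv_zSeries_apply hc (mem_ball_zero_iff.mp hw) v
  have hderiv : HasFDerivAt (fun w => zSeries (dz c) w * v + zSeries (dzbar c) w * conj v) _ z :=
    ((hasFDerivAt_zSeries (absConvOnBall_dz hc) hz).mul_const v).add
      ((hasFDerivAt_zSeries (absConvOnBall_dzbar hc) hz).mul_const (conj v))
  rw [hev.fderiv_eq, hderiv.fderiv]
  simp only [smul_add, add_apply, smul_apply, ContinuousLinearMap.id_apply, smul_eq_mul,
    ContinuousLinearEquiv.coe_coe, ContinuousAlgEquiv.coeCLE_apply, conjCAE_apply]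
  ring

theorem laplacianC_zSeries (hc : AbsConvOnBall c ρ) {z : ℂ} (hz : ‖z‖ < ρ) :
    laplacianC (zSeries c) z = 4 * zSeries (dz (dzbar c)) z := by
  rw [laplacianC, fderiv_fderiv_zSeries_apply hc hz, fderiv_fderiv_zSeries_apply hc hz, dzbar_dz]
  simp only [map_one, conj_I]
  linear_combination (zSeries (dz (dz c)) z - 2 * zSeries (dz (dzbar c)) z +
    zSeries (dzbar (dzbar c)) z) * I_mul_I

end Series

noncomputable def primitiveCoeff (d : ℕ × ℕ → ℂ) (γ : ℕ × ℕ) : ℂ :=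
  if γ.1 = 0 ∨ γ.2 = 0 then 0 else d (γ.1 - 1, γ.2 - 1) / (γ.1 * γ.2)

lemma primitiveCoeff_of_lt {d : ℕ × ℕ → ℂ} {γ : ℕ × ℕ} (hγ : γ.1 < 1 ∨ γ.2 < 1) :
    primitiveCoeff d γ = 0 :=
  if_pos (by omega)

lemma primitiveCoeff_add_one (d : ℕ × ℕ → ℂ) (β : ℕ × ℕ) :
    primitiveCoeff d (β.1 + 1, β.2 + 1) = d β / ((β.1 + 1) * (β.2 + 1)) := by
  simp [primitiveCoeff]

lemma dz_dzbar_primitiveCoeff (d : ℕ × ℕ → ℂ) : dz (dzbar (primitiveCoeff d)) = d := by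
  ext β
  rw [dz, dzbar, primitiveCoeff_add_one]
  field_simp

lemma tsum_primitiveCoeff_mul_zMonomial (d : ℕ × ℕ → ℂ) (w : ℂ) :
    ∑' β : ℕ × ℕ, d β / ((β.1 + 1) * (β.2 + 1)) * zMonomial (β.1 + 1, β.2 + 1) w =
      zSeries (primitiveCoeff d) w := by
  refine (tsum_congr fun β => ?_).trans
    (tsum_shift (i := 1) (j := 1) fun γ hγ => by rw [primitiveCoeff_of_lt hγ, zero_mul])
  rw [primitiveCoeff_add_one]

lemma absConvOnBall_primitiveCoeff {d : ℕ × ℕ → ℂ} {ρ : ℝ} (hd : AbsConvOnBall d ρ) :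
    AbsConvOnBall (primitiveCoeff d) ρ := by
  intro R hR hRρ
  refine (summable_shift_iff (i := 1) (j := 1) fun γ hγ => by
    rw [primitiveCoeff_of_lt hγ, norm_zero, zero_mul]).mp ?_
  refine ((hd R hR hRρ).mul_left (R ^ 2)).of_nonneg_of_le (fun _ => by positivity) fun β => ?_
  have hden : 1 ≤ ‖((β.1 : ℂ) + 1) * ((β.2 : ℂ) + 1)‖ := by
    rw [norm_mul, norm_natCast_add_one, norm_natCast_add_one]
    nlinarith [(β.1.cast_nonneg : (0 : ℝ) ≤ β.1), (β.2.cast_nonneg : (0 : ℝ) ≤ β.2)]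
  rw [primitiveCoeff_add_one, norm_div]
  calc _ ≤ ‖d β‖ * R ^ (β.1 + 1 + (β.2 + 1)) := by gcongr; exact div_le_self (norm_nonneg _) hden
    _ = R ^ 2 * (‖d β‖ * R ^ (β.1 + β.2)) := by ring

lemma absConvOnBall_of_norm_le {c : ℕ × ℕ → ℂ} {C M : ℝ}
    (hc : ∀ α : ℕ × ℕ, ‖c α‖ ≤ C * M ^ (α.1 + α.2)) : AbsConvOnBall c M⁻¹ := by
  intro R hR hRM
  have hM : 0 < M := inv_pos.mp (hR.trans hRM)
  have hC : 0 ≤ C := by simpa using (norm_nonneg _).trans (hc 0)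
  have hMR : M * R < 1 := by
    calc M * R < M * M⁻¹ := by gcongr
      _ = 1 := mul_inv_cancel₀ hM.ne'
  have hgeom := summable_geometric_of_lt_one (by positivity) hMR
  refine ((hgeom.mul_left C).mul_of_nonneg hgeom (fun _ => by positivity) fun _ => by positivity)
    |>.of_nonneg_of_le (fun _ => by positivity) fun α => ?_
  calc ‖c α‖ * R ^ (α.1 + α.2) ≤ C * M ^ (α.1 + α.2) * R ^ (α.1 + α.2) := by gcongr; exact hc α
    _ = _ := by ring

theorem interior_particular_solution_general (ftilde : ℕ × ℕ → ℂ) (C M : ℝ)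
    (hbound : ∀ α : ℕ × ℕ, ‖ftilde α‖ ≤ C * M ^ (α.1 + α.2))
    (f uf : ℂ → ℂ)
    (hf : ∀ z : ℂ, f z =
      ∑' α : ℕ × ℕ, ftilde α * z ^ α.1 * (starRingEnd ℂ z) ^ α.2)
    (huf : ∀ z : ℂ, uf z =
      ∑' α : ℕ × ℕ, ftilde α / (4 * (α.1 + 1) * (α.2 + 1))
        * z ^ (α.1 + 1) * (starRingEnd ℂ z) ^ (α.2 + 1)) :
    ∀ z : ℂ, ‖z‖ < M⁻¹ →
      Summable (fun α : ℕ × ℕ => ftilde α / (4 * (α.1 + 1) * (α.2 + 1))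
        * z ^ (α.1 + 1) * (starRingEnd ℂ z) ^ (α.2 + 1)) ∧
      laplacianC uf z = f z := by
  intro z hz
  have hu : AbsConvOnBall (primitiveCoeff fun α => ftilde α / 4) M⁻¹ :=
    absConvOnBall_primitiveCoeff <| absConvOnBall_of_norm_le fun α => by
      rw [norm_div]
      exact (div_le_self (norm_nonneg _) (by norm_num)).trans (hbound α)
  have hterm : ∀ w α, ftilde α / (4 * (α.1 + 1) * (α.2 + 1)) * w ^ (α.1 + 1) * conj w ^ (α.2 + 1)
      = ftilde α / 4 / ((α.1 + 1) * (α.2 + 1)) * zMonomial (α.1 + 1, α.2 + 1) w := fun w α => by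
    rw [zMonomial, div_div, mul_assoc 4]
    ring
  have huf_eq : uf = zSeries (primitiveCoeff fun α => ftilde α / 4) := funext fun w => by
    rw [huf, ← tsum_primitiveCoeff_mul_zMonomial]
    exact tsum_congr (hterm w)
  refine ⟨((summable_zSeries hu hz).comp_injective (injective_shift 1 1)).congr fun α => ?_, ?_⟩
  · rw [Function.comp_apply, primitiveCoeff_add_one, hterm]
  · rw [huf_eq, laplacianC_zSeries hu hz, dz_dzbar_primitiveCoeff, hf, zSeries, ← tsum_mul_left]
    exact tsum_congr fun α => by rw [zMonomial]; ring

/-- If `f(ζ) = ∑_α f̃_α ζ^{α₁} ζ̄^{α₂}` with `|f̃_α| ≤ C M^{|α|}`, then the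
series `u_f(ζ) = ∑_α f̃_α/(4(α₁+1)(α₂+1)) ζ^{α₁+1} ζ̄^{α₂+1}` converges on the
ball `B(0, M⁻¹)` and satisfies `Δ u_f = f` there. -/
theorem interior_particular_solution (ftilde : ℕ × ℕ → ℂ) (C M : ℝ)
    (hC : 0 < C) (hM : 0 < M)
    (hbound : ∀ α : ℕ × ℕ, ‖ftilde α‖ ≤ C * M ^ (α.1 + α.2))
    (f uf : ℂ → ℂ)
    (hf : ∀ z : ℂ, f z =
      ∑' α : ℕ × ℕ, ftilde α * z ^ α.1 * (starRingEnd ℂ z) ^ α.2)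
    (huf : ∀ z : ℂ, uf z =
      ∑' α : ℕ × ℕ, ftilde α / (4 * (α.1 + 1) * (α.2 + 1))
        * z ^ (α.1 + 1) * (starRingEnd ℂ z) ^ (α.2 + 1)) :
    ∀ z : ℂ, ‖z‖ < M⁻¹ →
      Summable (fun α : ℕ × ℕ => ftilde α / (4 * (α.1 + 1) * (α.2 + 1))
        * z ^ (α.1 + 1) * (starRingEnd ℂ z) ^ (α.2 + 1)) ∧
      laplacianC uf z = f z :=
  interior_particular_solution_general ftilde C M hbound f uf hf huf
end
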